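/- Let λ ≥ 0 and let f_Q be a Q-level quantizer satisfying the constrained stationarity condition ∫_{τ_i}^{τ_{i+1}} ((λ + 2)τ − 2 m_i) φ(τ) dτ = 0 for every i = 1, …, Q, together with E[f_Q(g) g] = 1, and set e'_Q = E[(f_Q(g) − g)²]. Then E[f_Q(g)⁴] ≤ 3(1 + λ/2)⁴ and η² := E[(f_Q(g) − g)² g²] ≤ 3(e'_Q + 2)². -/

import Mathlib

noncomputable section
open MeasureTheory ProbabilityTheory Real Set

/-- The standard Gaussian measure on `ℝ`. -/
def stdGauss : Measure ℝ := gaussianReal 0 1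

instance : IsProbabilityMeasure stdGauss := by unfold stdGauss; infer_instance

/-- A `Q`-level quantizer: thresholds `-∞ = τ₁ < τ₂ < … < τ_{Q+1} = +∞` (indexed here by
`Fin (Q+1)`, so `τ 0 = ⊥` and `τ (Fin.last Q) = ⊤`) and values `m₁, …, m_Q`, with the
step function `f` equal to `m i` on the cell `[τ i, τ (i+1))`. -/
structure Quantizer (Q : ℕ) where
  m : Fin Q → ℝ
  τ : Fin (Q + 1) → EReal
  f : ℝ → ℝ
  τ_bot : τ 0 = ⊥
  τ_top : τ (Fin.last Q) = ⊤
  τ_mono : StrictMono τ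
  f_eq : ∀ (i : Fin Q) (t : ℝ), τ i.castSucc ≤ (t : EReal) → (t : EReal) < τ i.succ → f t = m i

/-- The `i`-th quantization cell `[τ_i, τ_{i+1})` (as a subset of `ℝ`). -/
def Quantizer.cell {Q : ℕ} (q : Quantizer Q) (i : Fin Q) : Set ℝ :=
  {t : ℝ | q.τ i.castSucc ≤ (t : EReal) ∧ (t : EReal) < q.τ i.succ}

/-- The mean squared error `E[(f_Q(g) - g)²]` of a quantizer. -/
def MSE {Q : ℕ} (q : Quantizer Q) : ℝ := ∫ t, (q.f t - t) ^ 2 ∂stdGauss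

/-- Constrained (Lagrangian) stationarity:
`∫_{τ_i}^{τ_{i+1}} ((λ+2)τ − 2 m_i) φ(τ) dτ = 0` for every cell. -/
def ConstrainedStationary {Q : ℕ} (q : Quantizer Q) (lam : ℝ) : Prop :=
  ∀ i : Fin Q, ∫ t in q.cell i, ((lam + 2) * t - 2 * q.m i) ∂stdGauss = 0


/-! Write `a = 1 + λ/2`. Stationarity says that on every cell `f_Q` is `a` times the mean of `g`
over the cell, so Jensen's inequality on each cell (two Cauchy–Schwarz steps) gives
`E[f_Q(g)⁴] ≤ a⁴ E[g⁴] = 3a⁴`. Since `f_Q` is constant on cells, stationarity also gives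
`E[f_Q(g)²] = a E[f_Q(g) g] = a`, hence `e'_Q = a - 1`. Finally
`η² = E[f²g²] - 2 E[f g³] + E[g⁴]`, and Cauchy–Schwarz against `E[g⁴] = 3` bounds the first
two terms by `3a²` and `6a`, so `η² ≤ 3(a + 1)² = 3(e'_Q + 2)²`. -/

open scoped NNReal Nat InnerProductSpace

section CauchySchwarz

variable {α : Type*} [MeasurableSpace α] {μ : Measure α}

lemma inner_toLp_eq_integral_mul {u v : α → ℝ} (hu : MemLp u 2 μ) (hv : MemLp v 2 μ) :
    ⟪hu.toLp u, hv.toLp v⟫_ℝ = ∫ x, u x * v x ∂μ := by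
  rw [L2.inner_def]
  refine integral_congr_ae ?_
  filter_upwards [hu.coeFn_toLp, hv.coeFn_toLp] with x hux hvx
  rw [hux, hvx, real_inner_eq_re_inner, RCLike.inner_apply]
  simp [mul_comm]

lemma sq_integral_mul_le {u v : α → ℝ} (hu : MemLp u 2 μ) (hv : MemLp v 2 μ) :
    (∫ x, u x * v x ∂μ) ^ 2 ≤ (∫ x, u x ^ 2 ∂μ) * ∫ x, v x ^ 2 ∂μ := by
  have h := real_inner_mul_inner_self_le (hu.toLp u) (hv.toLp v)
  simp only [inner_toLp_eq_integral_mul, ← sq] at h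
  exact h

lemma pow_four_integral_le [IsFiniteMeasure μ] {g : α → ℝ} (hg : AEStronglyMeasurable g μ)
    (hg2 : Integrable (fun x => g x ^ 2) μ) (hg4 : Integrable (fun x => g x ^ 4) μ) :
    (∫ x, g x ∂μ) ^ 4 ≤ μ.real univ ^ 3 * ∫ x, g x ^ 4 ∂μ := by
  have h1 : (∫ x, g x ∂μ) ^ 2 ≤ μ.real univ * ∫ x, g x ^ 2 ∂μ := by
    simpa using sq_integral_mul_le (memLp_const 1) ((memLp_two_iff_integrable_sq hg).2 hg2)
  have h2 : (∫ x, g x ^ 2 ∂μ) ^ 2 ≤ μ.real univ * ∫ x, g x ^ 4 ∂μ := by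
    have hg2' : MemLp (fun x => g x ^ 2) 2 μ :=
      (memLp_two_iff_integrable_sq (f := fun x => g x ^ 2) (hg.pow 2)).2
        (by simpa only [← pow_mul] using hg4)
    simpa [← pow_mul] using sq_integral_mul_le (memLp_const 1) hg2'
  calc (∫ x, g x ∂μ) ^ 4 = ((∫ x, g x ∂μ) ^ 2) ^ 2 := by ring
    _ ≤ (μ.real univ * ∫ x, g x ^ 2 ∂μ) ^ 2 := pow_le_pow_left₀ (sq_nonneg _) h1 2
    _ = μ.real univ ^ 2 * (∫ x, g x ^ 2 ∂μ) ^ 2 := by ring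
    _ ≤ μ.real univ ^ 2 * (μ.real univ * ∫ x, g x ^ 4 ∂μ) := by gcongr
    _ = μ.real univ ^ 3 * ∫ x, g x ^ 4 ∂μ := by ring

end CauchySchwarz

lemma gaussianPDFReal_zero_one (x : ℝ) :
    gaussianPDFReal 0 1 x = (√(2 * π))⁻¹ * rexp (-(1 / 2) * x ^ 2) := by
  rw [gaussianPDFReal]
  push_cast
  ring_nf

lemma integral_pow_two_mul_gaussianReal (k : ℕ) :
    ∫ x, x ^ (2 * k) ∂gaussianReal 0 1 = (2 * k - 1)‼ := by
  have hIoi : ∫ x in Ioi (0 : ℝ), x ^ (2 * k) * rexp (-(1 / 2) * x ^ 2)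
      = 2 ^ k * √2 * (1 / 2) * Real.Gamma (k + 1 / 2) := by
    have h := integral_rpow_mul_exp_neg_mul_rpow (p := 2) (q := 2 * k) (b := 1 / 2)
      two_pos (by linarith [k.cast_nonneg (α := ℝ)]) (by norm_num)
    have hb : (1 / 2 : ℝ) ^ (-(2 * k + 1 : ℝ) / 2) = 2 ^ k * √2 := by
      rw [one_div, Real.inv_rpow two_pos.le, ← Real.rpow_neg two_pos.le, Real.sqrt_eq_rpow,
        ← Real.rpow_natCast, ← Real.rpow_add two_pos]
      ring_nf
    rw [hb, show (2 * k + 1 : ℝ) / 2 = k + 1 / 2 by ring] at h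
    rw [← h]
    refine setIntegral_congr_fun measurableSet_Ioi fun x _ => ?_
    norm_cast
  rw [integral_gaussianReal_eq_integral_smul one_ne_zero]
  simp only [smul_eq_mul, gaussianPDFReal_zero_one]
  have habs : ∫ x, x ^ (2 * k) * rexp (-(1 / 2) * x ^ 2)
      = 2 * ∫ x in Ioi (0 : ℝ), x ^ (2 * k) * rexp (-(1 / 2) * x ^ 2) := by
    rw [← integral_comp_abs]
    congr with x
    rw [pow_mul, pow_mul, sq_abs]
  simp_rw [mul_assoc, integral_const_mul, mul_comm (rexp _), habs, hIoi,
    Real.Gamma_nat_add_half, Real.sqrt_mul two_pos.le]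
  field_simp

lemma integrable_pow_gaussianReal (μ : ℝ) (v : ℝ≥0) (n : ℕ) :
    Integrable (fun x => x ^ n) (gaussianReal μ v) := by
  rcases eq_or_ne n 0 with rfl | hn
  · simp
  · refine (integrable_norm_iff (by fun_prop)).1 ?_
    simpa using (memLp_id_gaussianReal (μ := μ) (v := v) n).integrable_norm_pow hn

lemma integrable_pow_stdGauss (n : ℕ) : Integrable (fun t : ℝ => t ^ n) stdGauss :=
  integrable_pow_gaussianReal 0 1 n

lemma integral_sq_stdGauss : ∫ t, t ^ 2 ∂stdGauss = 1 := by
  have h := integral_pow_two_mul_gaussianReal 1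
  norm_num at h
  exact h

lemma integral_pow_four_stdGauss : ∫ t, t ^ 4 ∂stdGauss = 3 := by
  have h := integral_pow_two_mul_gaussianReal 2
  norm_num at h
  exact h

section BoundedMultiplier

variable {F : ℝ → ℝ} {C : ℝ}

lemma integrable_pow_mul_pow_stdGauss (hF : Measurable F) (hC : ∀ t, |F t| ≤ C) (a b : ℕ) :
    Integrable (fun t => F t ^ a * t ^ b) stdGauss :=
  (integrable_pow_stdGauss b).bdd_mul (c := C ^ a) (hF.pow_const a).aestronglyMeasurable
    (ae_of_all _ fun t => by
      rw [norm_pow, Real.norm_eq_abs]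
      exact pow_le_pow_left₀ (abs_nonneg _) (hC t) a)

lemma integral_sub_sq_stdGauss (hF : Measurable F) (hC : ∀ t, |F t| ≤ C) :
    ∫ t, (F t - t) ^ 2 ∂stdGauss = ∫ t, F t ^ 2 ∂stdGauss - 2 * ∫ t, F t * t ∂stdGauss + 1 := by
  have hint := integrable_pow_mul_pow_stdGauss hF hC
  have h20 : Integrable (fun t => F t ^ 2) stdGauss := by simpa using hint 2 0
  have h11 : Integrable (fun t => F t * t) stdGauss := by simpa using hint 1 1
  have h02 : Integrable (fun t : ℝ => t ^ 2) stdGauss := by simpa using hint 0 2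
  calc ∫ t, (F t - t) ^ 2 ∂stdGauss
      = ∫ t, (F t ^ 2 - 2 * (F t * t) + t ^ 2) ∂stdGauss := by congr with t; ring
    _ = _ := by
      rw [integral_add ?_ h02, integral_sub h20 (h11.const_mul 2), integral_const_mul,
        integral_sq_stdGauss]
      exact h20.sub (h11.const_mul 2)

lemma integral_sub_sq_mul_sq_le (hF : Measurable F) (hC : ∀ t, |F t| ≤ C) {b : ℝ} (hb : 0 ≤ b)
    (h4 : ∫ t, F t ^ 4 ∂stdGauss ≤ 3 * b ^ 4) :
    ∫ t, (F t - t) ^ 2 * t ^ 2 ∂stdGauss ≤ 3 * (b + 1) ^ 2 := by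
  have hint := integrable_pow_mul_pow_stdGauss hF hC
  have h22 : Integrable (fun t => F t ^ 2 * t ^ 2) stdGauss := hint 2 2
  have h13 : Integrable (fun t => F t * t ^ 3) stdGauss := by simpa using hint 1 3
  have h04 : Integrable (fun t : ℝ => t ^ 4) stdGauss := by simpa using hint 0 4
  have hmemLp (a c : ℕ) : MemLp (fun t => F t ^ a * t ^ c) 2 stdGauss :=
    (memLp_two_iff_integrable_sq (by fun_prop)).2 (by
      simpa only [mul_pow, ← pow_mul] using hint (a * 2) (c * 2))
  set S2 := ∫ t, F t ^ 2 * t ^ 2 ∂stdGauss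
  set S3 := ∫ t, F t * t ^ 3 ∂stdGauss
  have hS2 : S2 ≤ 3 * b ^ 2 := by
    have h := sq_integral_mul_le (hmemLp 2 0) (hmemLp 0 2)
    simp only [pow_zero, mul_one, one_mul, ← pow_mul, integral_pow_four_stdGauss] at h
    exact (abs_le_of_sq_le_sq' (by nlinarith) (by positivity)).2
  have hS3 : -(3 * b) ≤ S3 := by
    have h := sq_integral_mul_le (hmemLp 1 1) (hmemLp 0 2)
    simp only [pow_zero, pow_one, one_mul, mul_pow, ← pow_mul, mul_assoc, ← pow_succ',
      integral_pow_four_stdGauss] at h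
    exact (abs_le_of_sq_le_sq' (by nlinarith) (by positivity)).1
  have hexpand : ∫ t, (F t - t) ^ 2 * t ^ 2 ∂stdGauss = S2 - 2 * S3 + 3 := by
    calc ∫ t, (F t - t) ^ 2 * t ^ 2 ∂stdGauss
        = ∫ t, (F t ^ 2 * t ^ 2 - 2 * (F t * t ^ 3) + t ^ 4) ∂stdGauss := by
          congr with t; ring
      _ = _ := by
        rw [integral_add ?_ h04, integral_sub h22 (h13.const_mul 2), integral_const_mul,
          integral_pow_four_stdGauss]
        exact h22.sub (h13.const_mul 2)
  rw [hexpand]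
  nlinarith

end BoundedMultiplier

lemma Fin.exists_castSucc_le_and_lt_succ {β : Type*} [LinearOrder β] {n : ℕ}
    (τ : Fin (n + 1) → β) {x : β} (h0 : τ 0 ≤ x) (hlast : x < τ (Fin.last n)) :
    ∃ i : Fin n, τ i.castSucc ≤ x ∧ x < τ i.succ := by
  by_contra! h
  have hle : ∀ j, τ j ≤ x := fun j => Fin.induction h0 (fun i hi => h i hi) j
  exact (hle _).not_gt hlast

namespace Quantizer

variable {Q : ℕ} (q : Quantizer Q)

lemma measurableSet_cell (i : Fin Q) : MeasurableSet (q.cell i) :=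
  measurable_coe_real_ereal (measurableSet_Ico (a := q.τ i.castSucc) (b := q.τ i.succ))

lemma pairwise_disjoint_cell : Pairwise (Function.onFun Disjoint q.cell) := by
  refine (pairwise_disjoint_on q.cell).2 fun i j hij => Set.disjoint_left.2 fun t hi hj => ?_
  have hτ : q.τ i.succ ≤ q.τ j.castSucc := q.τ_mono.monotone (Fin.succ_le_castSucc_iff.2 hij)
  exact (hi.2.trans_le (hτ.trans hj.1)).false

lemma iUnion_cell : ⋃ i, q.cell i = univ :=
  eq_univ_of_forall fun t => mem_iUnion.2 <|
    Fin.exists_castSucc_le_and_lt_succ q.τ (q.τ_bot ▸ bot_le) (q.τ_top ▸ EReal.coe_lt_top t)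

lemma f_eq_of_mem_cell {i : Fin Q} {t : ℝ} (ht : t ∈ q.cell i) : q.f t = q.m i :=
  q.f_eq i t ht.1 ht.2

lemma f_eq_sum_indicator : q.f = fun t => ∑ i, (q.cell i).indicator (fun _ => q.m i) t := by
  ext t
  obtain ⟨i, hi⟩ := mem_iUnion.1 (q.iUnion_cell ▸ mem_univ t)
  rw [Finset.sum_eq_single i (fun j _ hji => indicator_of_notMem
      (Set.disjoint_right.1 (q.pairwise_disjoint_cell hji) hi) _) (by simp),
    indicator_of_mem hi, q.f_eq_of_mem_cell hi]

lemma measurable_f : Measurable q.f := by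
  rw [f_eq_sum_indicator]
  exact Finset.measurable_sum _ fun i _ => measurable_const.indicator (q.measurableSet_cell i)

lemma abs_f_le (t : ℝ) : |q.f t| ≤ ∑ i, |q.m i| := by
  obtain ⟨i, hi⟩ := mem_iUnion.1 (q.iUnion_cell ▸ mem_univ t)
  rw [q.f_eq_of_mem_cell hi]
  exact Finset.single_le_sum (fun j _ => abs_nonneg (q.m j)) (Finset.mem_univ i)

lemma integral_comp_f (μ : Measure ℝ) (G : ℝ → ℝ → ℝ)
    (hG : Integrable (fun t => G (q.f t) t) μ) :
    ∫ t, G (q.f t) t ∂μ = ∑ i, ∫ t in q.cell i, G (q.m i) t ∂μ := by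
  rw [← setIntegral_univ, ← q.iUnion_cell,
    integral_iUnion_fintype q.measurableSet_cell q.pairwise_disjoint_cell
      fun _ => hG.integrableOn]
  refine Finset.sum_congr rfl fun i _ =>
    setIntegral_congr_fun (q.measurableSet_cell i) fun t ht => ?_
  rw [q.f_eq_of_mem_cell ht]

end Quantizer

namespace ConstrainedStationary

variable {Q : ℕ} {q : Quantizer Q} {lam : ℝ}

lemma m_mul_measureReal_cell (hstat : ConstrainedStationary q lam) (i : Fin Q) :
    q.m i * stdGauss.real (q.cell i) = (1 + lam / 2) * ∫ t in q.cell i, t ∂stdGauss := by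
  have hid : Integrable (fun t : ℝ => t) stdGauss := by
    simpa using integrable_pow_stdGauss 1
  have h := hstat i
  rw [integral_sub (hid.restrict.const_mul _) (integrable_const _), integral_const_mul,
    setIntegral_const, smul_eq_mul] at h
  linarith

lemma integral_f_sq (hstat : ConstrainedStationary q lam) :
    ∫ t, q.f t ^ 2 ∂stdGauss = (1 + lam / 2) * ∫ t, q.f t * t ∂stdGauss := by
  have hint := integrable_pow_mul_pow_stdGauss q.measurable_f q.abs_f_le
  rw [q.integral_comp_f _ (fun x _ => x ^ 2) (by simpa using hint 2 0),
    q.integral_comp_f _ (fun x t => x * t) (by simpa using hint 1 1), Finset.mul_sum]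
  refine Finset.sum_congr rfl fun i _ => ?_
  rw [setIntegral_const, integral_const_mul, smul_eq_mul]
  linear_combination q.m i * hstat.m_mul_measureReal_cell i

lemma measureReal_cell_mul_pow_four_le (hstat : ConstrainedStationary q lam) (i : Fin Q) :
    stdGauss.real (q.cell i) * q.m i ^ 4 ≤
      (1 + lam / 2) ^ 4 * ∫ t in q.cell i, t ^ 4 ∂stdGauss := by
  set P := stdGauss.real (q.cell i)
  have hint (n : ℕ) : Integrable (fun t : ℝ => t ^ n) (stdGauss.restrict (q.cell i)) :=
    (integrable_pow_stdGauss n).restrict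
  have hJensen := pow_four_integral_le (μ := stdGauss.restrict (q.cell i)) (g := fun t => t)
    (by fun_prop) (hint 2) (hint 4)
  rw [measureReal_restrict_apply_univ] at hJensen
  rcases (show 0 ≤ P from measureReal_nonneg).eq_or_lt with hP | hP
  · rw [← hP, zero_mul]
    exact mul_nonneg (by positivity) (integral_nonneg fun t => by positivity)
  refine le_of_mul_le_mul_right ?_ (pow_pos hP 3)
  calc P * q.m i ^ 4 * P ^ 3 = (q.m i * P) ^ 4 := by ring
    _ = (1 + lam / 2) ^ 4 * (∫ t in q.cell i, t ∂stdGauss) ^ 4 := by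
      rw [hstat.m_mul_measureReal_cell i, mul_pow]
    _ ≤ (1 + lam / 2) ^ 4 * (P ^ 3 * ∫ t in q.cell i, t ^ 4 ∂stdGauss) := by gcongr
    _ = _ := by ring

lemma integral_f_pow_four_le (hstat : ConstrainedStationary q lam) :
    ∫ t, q.f t ^ 4 ∂stdGauss ≤ 3 * (1 + lam / 2) ^ 4 := by
  have hint := integrable_pow_mul_pow_stdGauss q.measurable_f q.abs_f_le
  rw [q.integral_comp_f _ (fun x _ => x ^ 4) (by simpa using hint 4 0), mul_comm 3,
    ← integral_pow_four_stdGauss,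
    q.integral_comp_f _ (fun _ t => t ^ 4) (by simpa using hint 0 4), Finset.mul_sum]
  refine Finset.sum_le_sum fun i _ => ?_
  rw [setIntegral_const, smul_eq_mul]
  exact hstat.measureReal_cell_mul_pow_four_le i

end ConstrainedStationary

theorem constrained_eta_bound_general {Q : ℕ} (q : Quantizer Q) (lam : ℝ)
    (hstat : ConstrainedStationary q lam)
    (hμ : ∫ t, q.f t * t ∂stdGauss = 1)
    (eQ' : ℝ) (heQ' : eQ' = ∫ t, (q.f t - t) ^ 2 ∂stdGauss) :
    (∫ t, q.f t ^ 4 ∂stdGauss ≤ 3 * (1 + lam / 2) ^ 4) ∧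
    (∫ t, (q.f t - t) ^ 2 * t ^ 2 ∂stdGauss ≤ 3 * (eQ' + 2) ^ 2) := by
  have h4 := hstat.integral_f_pow_four_le
  have h2 : ∫ t, q.f t ^ 2 ∂stdGauss = 1 + lam / 2 := by rw [hstat.integral_f_sq, hμ, mul_one]
  have ha : 0 ≤ 1 + lam / 2 := h2 ▸ integral_nonneg fun t => sq_nonneg _
  have heQ : eQ' + 2 = 1 + lam / 2 + 1 := by
    rw [heQ', integral_sub_sq_stdGauss q.measurable_f q.abs_f_le, h2, hμ]
    ring
  exact ⟨h4, heQ ▸ integral_sub_sq_mul_sq_le q.measurable_f q.abs_f_le ha h4⟩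

/-- Under constrained stationarity with multiplier `λ ≥ 0` and
`E[f_Q(g) g] = 1`, with `e'_Q = E[(f_Q(g)-g)²]`:
`E[f_Q(g)⁴] ≤ 3(1+λ/2)⁴` and `η² = E[(f_Q(g) - g)² g²] ≤ 3(e'_Q + 2)²`. -/
theorem constrained_eta_bound {Q : ℕ} (q : Quantizer Q) (lam : ℝ) (hlam : 0 ≤ lam)
    (hstat : ConstrainedStationary q lam)
    (hμ : ∫ t, q.f t * t ∂stdGauss = 1)
    (eQ' : ℝ) (heQ' : eQ' = ∫ t, (q.f t - t) ^ 2 ∂stdGauss) :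
    (∫ t, q.f t ^ 4 ∂stdGauss ≤ 3 * (1 + lam / 2) ^ 4) ∧
    (∫ t, (q.f t - t) ^ 2 * t ^ 2 ∂stdGauss ≤ 3 * (eQ' + 2) ^ 2) :=
  constrained_eta_bound_general q lam hstat hμ eQ' heQ'
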